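/- arXiv:0912.3290 — 3 statements merged into one kernel-verified Lean document; each statement's English description precedes it below -/
import Mathlib

section
/- Let H be a real Hilbert space, {T_t}_{t>0} a family of self-adjoint linear contractions on H, and v₁, v₂ ∈ H with ⟨v₁, v₁ - T_t v₁⟩ ≤ ⟨v₂, v₁ - T_t v₁⟩ and ⟨v₁, v₂ - T_t v₂⟩ = ⟨v₂, v₁ - T_t v₁⟩ for all t > 0. If lim_{t→0} (1/t)⟨v₂, v₂ - T_t v₂⟩ = E < ∞ exists, then limsup_{t→0} (1/t)⟨v₁, v₁ - T_t v₁⟩ ≤ E. -/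
open InnerProductSpace Filter

/-- If `{T_t}` are self-adjoint contractions on a real Hilbert space and
`v₁, v₂` satisfy `⟪v₁, v₁ - T_t v₁⟫ ≤ ⟪v₂, v₁ - T_t v₁⟫` and
`⟪v₁, v₂ - T_t v₂⟫ = ⟪v₂, v₁ - T_t v₁⟫` for all `t > 0`, and
`(1/t)⟪v₂, v₂ - T_t v₂⟫ → E` as `t → 0+`, then
`limsup_{t→0+} (1/t)⟪v₁, v₁ - T_t v₁⟫ ≤ E`. -/
theorem stmt1 {H : Type*} [NormedAddCommGroup H] [InnerProductSpace ℝ H] [CompleteSpace H]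
    (T : ℝ → H →L[ℝ] H)
    (hsa : ∀ t > (0:ℝ), ∀ x y : H, ⟪T t x, y⟫_ℝ = ⟪x, T t y⟫_ℝ)
    (hcontr : ∀ t > (0:ℝ), ‖T t‖ ≤ 1)
    (v₁ v₂ : H) (E : ℝ) (hE : 0 ≤ E)
    (h1 : ∀ t > (0:ℝ), ⟪v₁, v₁ - T t v₁⟫_ℝ ≤ ⟪v₂, v₁ - T t v₁⟫_ℝ)
    (h2 : ∀ t > (0:ℝ), ⟪v₁, v₂ - T t v₂⟫_ℝ = ⟪v₂, v₁ - T t v₁⟫_ℝ)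
    (hlim : Tendsto (fun t : ℝ => (1 / t) * ⟪v₂, v₂ - T t v₂⟫_ℝ)
      (nhdsWithin 0 (Set.Ioi 0)) (nhds E)) :
    limsup (fun t : ℝ => (1 / t) * ⟪v₁, v₁ - T t v₁⟫_ℝ) (nhdsWithin 0 (Set.Ioi 0)) ≤ E := by
  -- positivity of the form x ↦ ⟪x, x - T t x⟫
  have hpos : ∀ t > (0:ℝ), ∀ x : H, 0 ≤ ⟪x, x - T t x⟫_ℝ := by
    intro t ht x
    have h1' : ⟪x, T t x⟫_ℝ ≤ ‖x‖ * ‖T t x‖ := real_inner_le_norm _ _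
    have h2' : ‖T t x‖ ≤ ‖T t‖ * ‖x‖ := (T t).le_opNorm x
    have h3' : ‖T t‖ ≤ 1 := hcontr t ht
    have h4' : ⟪x, x⟫_ℝ = ‖x‖ * ‖x‖ := real_inner_self_eq_norm_mul_norm x
    rw [inner_sub_right]
    nlinarith [norm_nonneg x, norm_nonneg (T t x)]
  -- pointwise comparison
  have key : ∀ t > (0:ℝ), ⟪v₁, v₁ - T t v₁⟫_ℝ ≤ ⟪v₂, v₂ - T t v₂⟫_ℝ := by
    intro t ht
    have h2' := h2 t ht
    have ha : 0 ≤ ⟪v₁, v₁ - T t v₁⟫_ℝ := hpos t ht v₁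
    have hc : 0 ≤ ⟪v₂, v₂ - T t v₂⟫_ℝ := hpos t ht v₂
    have hab : ⟪v₁, v₁ - T t v₁⟫_ℝ ≤ ⟪v₂, v₁ - T t v₁⟫_ℝ := h1 t ht
    -- Cauchy–Schwarz for the form via the quadratic in `l`
    have hquad : ∀ l : ℝ, 0 ≤ ⟪v₁, v₁ - T t v₁⟫_ℝ * (l * l)
        + (2 * ⟪v₂, v₁ - T t v₁⟫_ℝ) * l + ⟪v₂, v₂ - T t v₂⟫_ℝ := by
      intro l
      have hp := hpos t ht (v₂ + l • v₁)
      have hv : (v₂ + l • v₁) - T t (v₂ + l • v₁)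
          = (v₂ - T t v₂) + l • (v₁ - T t v₁) := by
        rw [map_add, map_smul, smul_sub]; abel
      rw [hv] at hp
      simp only [inner_add_left, inner_add_right, inner_smul_left, inner_smul_right,
        conj_trivial] at hp
      rw [h2'] at hp
      linarith [hp]
    have hdisc := discrim_le_zero hquad
    rw [discrim] at hdisc
    nlinarith [mul_nonneg ha (sub_nonneg.2 hab),
      mul_nonneg (ha.trans hab) (sub_nonneg.2 hab), hc, ha]
  -- compare limsups
  have hev : (fun t : ℝ => (1 / t) * ⟪v₁, v₁ - T t v₁⟫_ℝ) ≤ᶠ[nhdsWithin 0 (Set.Ioi 0)]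
      (fun t : ℝ => (1 / t) * ⟪v₂, v₂ - T t v₂⟫_ℝ) := by
    filter_upwards [self_mem_nhdsWithin] with t ht
    have ht' : (0:ℝ) < t := ht
    exact mul_le_mul_of_nonneg_left (key t ht') (by positivity)
  have hev0 : ∀ᶠ t in nhdsWithin 0 (Set.Ioi 0),
      (0:ℝ) ≤ (1 / t) * ⟪v₁, v₁ - T t v₁⟫_ℝ := by
    filter_upwards [self_mem_nhdsWithin] with t ht
    have ht' : (0:ℝ) < t := ht
    exact mul_nonneg (by positivity) (hpos t ht' v₁)
  have hco : IsCoboundedUnder (· ≤ ·) (nhdsWithin 0 (Set.Ioi 0))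
      (fun t : ℝ => (1 / t) * ⟪v₁, v₁ - T t v₁⟫_ℝ) :=
    isCoboundedUnder_le_of_eventually_le _ hev0
  have hbd : IsBoundedUnder (· ≤ ·) (nhdsWithin 0 (Set.Ioi 0))
      (fun t : ℝ => (1 / t) * ⟪v₂, v₂ - T t v₂⟫_ℝ) := hlim.isBoundedUnder_le
  calc limsup (fun t : ℝ => (1 / t) * ⟪v₁, v₁ - T t v₁⟫_ℝ) (nhdsWithin 0 (Set.Ioi 0))
      ≤ limsup (fun t : ℝ => (1 / t) * ⟪v₂, v₂ - T t v₂⟫_ℝ) (nhdsWithin 0 (Set.Ioi 0)) :=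
        limsup_le_limsup hev hco hbd
    _ = E := hlim.limsup_eq
end

section
/- Let (Y_t)_{t∈[0,∞]} be a right-continuous submartingale indexed by [0,∞] (right-closed, i.e., Y_t ≤ E[Y_∞ | F_t] for all t) adapted to a filtration satisfying the usual conditions, and let τ be a stopping time. Then Y_τ is integrable and Y_0 ≤ E[Y_τ]. -/
/-!
Approximate `τ` from above by `ρₙ`, the first point of the grid `{k / 2ⁿ : k ≤ n 2ⁿ} ∪ {∞}` lying
above `τ`. Discrete optional sampling gives `E Y₀ ≤ E Y_{ρₙ}`, and `Y_{ρₙ} → Y_τ` pointwise by right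
continuity. Instead of proving uniform integrability, use the closure at `∞`:
`Y_{ρₙ} ≤ E[Y_∞ | F_{ρₙ}] ≤ c + E[(Y_∞ - c)⁺ | F_{ρₙ}]`, and the right-hand side has expectation
`c + E (Y_∞ - c)⁺` for every `n`. Fatou's lemma applied to the nonnegative differences gives
integrability of `Y_τ` and `E Y₀ - E (Y_∞ - c)⁺ ≤ E Y_τ`; let `c → ∞`.
-/

open MeasureTheory Filter Set
open scoped ENNReal NNReal Topology

section Fatou

variable {Ω : Type*} {mΩ : MeasurableSpace Ω} {μ : Measure Ω}

theorem integrable_of_lintegral_ofReal_ne_top {F : Ω → ℝ} (hF : AEStronglyMeasurable F μ)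
    (hpos : ∫⁻ ω, ENNReal.ofReal (F ω) ∂μ ≠ ∞) (hneg : ∫⁻ ω, ENNReal.ofReal (-F ω) ∂μ ≠ ∞) :
    Integrable F μ := by
  refine ⟨hF, ?_⟩
  calc ∫⁻ ω, ‖F ω‖ₑ ∂μ ≤ ∫⁻ ω, ENNReal.ofReal (F ω) + ENNReal.ofReal (-F ω) ∂μ := by
        refine lintegral_mono fun ω => ?_
        rw [Real.enorm_eq_ofReal_abs, abs_eq_max_neg, ENNReal.ofReal_max]
        exact max_le_add_of_nonneg zero_le zero_le
    _ = ∫⁻ ω, ENNReal.ofReal (F ω) ∂μ + ∫⁻ ω, ENNReal.ofReal (-F ω) ∂μ :=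
        lintegral_add_left' hF.aemeasurable.ennreal_ofReal _
    _ < ∞ := ENNReal.add_lt_top.2 ⟨hpos.lt_top, hneg.lt_top⟩

theorem lintegral_ofReal_le_of_tendsto_of_le {u g : ℕ → Ω → ℝ} {G : Ω → ℝ} {C : ℝ}
    (hg : ∀ n, Integrable (g n) μ) (hg₀ : ∀ n, 0 ≤ᵐ[μ] g n) (hgC : ∀ n, ∫ ω, g n ω ∂μ ≤ C)
    (hug : ∀ n, u n ≤ᵐ[μ] g n) (hlim : ∀ᵐ ω ∂μ, Tendsto (fun n => u n ω) atTop (𝓝 (G ω))) :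
    ∫⁻ ω, ENNReal.ofReal (G ω) ∂μ ≤ ENNReal.ofReal C := by
  have hG : ∀ᵐ ω ∂μ, ENNReal.ofReal (G ω) ≤ liminf (fun n => ENNReal.ofReal (g n ω)) atTop := by
    filter_upwards [hlim, ae_all_iff.2 hug] with ω hω hle
    rw [← ((ENNReal.continuous_ofReal.tendsto _).comp hω).liminf_eq]
    exact liminf_le_liminf (Eventually.of_forall fun n => ENNReal.ofReal_le_ofReal (hle n))
  calc ∫⁻ ω, ENNReal.ofReal (G ω) ∂μ
      ≤ ∫⁻ ω, liminf (fun n => ENNReal.ofReal (g n ω)) atTop ∂μ := lintegral_mono_ae hG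
    _ ≤ liminf (fun n => ∫⁻ ω, ENNReal.ofReal (g n ω) ∂μ) atTop :=
        lintegral_liminf_le' fun n => (hg n).aemeasurable.ennreal_ofReal
    _ ≤ liminf (fun _ => ENNReal.ofReal C) atTop := by
        refine liminf_le_liminf (Eventually.of_forall fun n => ?_)
        rw [← ofReal_integral_eq_lintegral_ofReal (hg n) (hg₀ n)]
        exact ENNReal.ofReal_le_ofReal (hgC n)
    _ = ENNReal.ofReal C := liminf_const _

theorem integrable_and_sub_le_integral_of_tendsto {f r : ℕ → Ω → ℝ} {F : Ω → ℝ} {a K : ℝ}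
    (hf : ∀ n, Integrable (f n) μ) (hr : ∀ n, Integrable (r n) μ) (hr₀ : ∀ n, 0 ≤ᵐ[μ] r n)
    (hfr : ∀ n, f n ≤ᵐ[μ] r n) (hrK : ∀ n, ∫ ω, r n ω ∂μ ≤ K) (ha : ∀ n, a ≤ ∫ ω, f n ω ∂μ)
    (hlim : ∀ᵐ ω ∂μ, Tendsto (fun n => f n ω) atTop (𝓝 (F ω))) :
    Integrable F μ ∧ a - K ≤ ∫ ω, F ω ∂μ := by
  have haK : a ≤ K := (ha 0).trans ((integral_mono_ae (hf 0) (hr 0) (hfr 0)).trans (hrK 0))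
  have hpos : ∫⁻ ω, ENNReal.ofReal (F ω) ∂μ ≤ ENNReal.ofReal K :=
    lintegral_ofReal_le_of_tendsto_of_le hr hr₀ hrK hfr hlim
  have hneg : ∫⁻ ω, ENNReal.ofReal (-F ω) ∂μ ≤ ENNReal.ofReal (K - a) := by
    refine lintegral_ofReal_le_of_tendsto_of_le (u := fun n => -f n)
      (g := fun n ω => r n ω - f n ω) (fun n => (hr n).sub (hf n)) (fun n => ?_) (fun n => ?_)
      (fun n => ?_) ?_
    · filter_upwards [hfr n] with ω hω using sub_nonneg.2 hω
    · rw [integral_sub (hr n) (hf n)]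
      linarith [hrK n, ha n]
    · filter_upwards [hr₀ n] with ω hω
      simp only [Pi.neg_apply, Pi.zero_apply] at hω ⊢
      linarith
    · filter_upwards [hlim] with ω hω using hω.neg
  have hF : Integrable F μ :=
    integrable_of_lintegral_ofReal_ne_top
      (aestronglyMeasurable_of_tendsto_ae atTop (fun n => (hf n).1) hlim)
      (ne_top_of_le_ne_top ENNReal.ofReal_ne_top hpos)
      (ne_top_of_le_ne_top ENNReal.ofReal_ne_top hneg)
  refine ⟨hF, ?_⟩
  have hneg' : (∫⁻ ω, ENNReal.ofReal (-F ω) ∂μ).toReal ≤ K - a := by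
    simpa [ENNReal.toReal_ofReal (sub_nonneg.2 haK)] using
      ENNReal.toReal_mono ENNReal.ofReal_ne_top hneg
  rw [integral_eq_lintegral_pos_part_sub_lintegral_neg_part hF]
  linarith [ENNReal.toReal_nonneg (a := ∫⁻ ω, ENNReal.ofReal (F ω) ∂μ)]

theorem tendsto_integral_max_sub_const_atTop {g : Ω → ℝ} (hg : Integrable g μ) :
    Tendsto (fun c : ℝ => ∫ ω, max (g ω - c) 0 ∂μ) atTop (𝓝 0) := by
  have hlim : ∀ ω, Tendsto (fun c : ℝ => max (g ω - c) 0) atTop (𝓝 0) := fun ω =>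
    tendsto_const_nhds.congr' <| (eventually_ge_atTop (g ω)).mono fun c hc =>
      (max_eq_right (by linarith)).symm
  simpa using tendsto_integral_filter_of_dominated_convergence (fun ω => |g ω|)
    (Eventually.of_forall fun c => by have := hg.1; fun_prop)
    ((eventually_ge_atTop 0).mono fun c hc => Eventually.of_forall fun ω => by
      rw [Real.norm_eq_abs, abs_of_nonneg (le_max_right _ _)]
      exact max_le (by linarith [le_abs_self (g ω)]) (abs_nonneg _))
    hg.abs (Eventually.of_forall hlim)

end Fatou

noncomputable def dyadicGrid (n k : ℕ) : ℝ≥0∞ :=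
  if k ≤ n * 2 ^ n then ((k / 2 ^ n : ℝ≥0) : ℝ≥0∞) else ∞

lemma dyadicGrid_zero (n : ℕ) : dyadicGrid n 0 = 0 := by simp [dyadicGrid]

lemma dyadicGrid_of_lt {n k : ℕ} (hk : n * 2 ^ n < k) : dyadicGrid n k = ∞ := by
  simp [dyadicGrid, not_le.2 hk]

lemma monotone_dyadicGrid (n : ℕ) : Monotone (dyadicGrid n) := by
  intro k l hkl
  by_cases hl : l ≤ n * 2 ^ n
  · rw [dyadicGrid, dyadicGrid, if_pos (hkl.trans hl), if_pos hl, ENNReal.coe_le_coe]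
    gcongr
  · rw [dyadicGrid_of_lt (not_le.1 hl)]
    exact le_top

lemma exists_le_dyadicGrid (n : ℕ) (x : ℝ≥0∞) : ∃ k, x ≤ dyadicGrid n k :=
  ⟨n * 2 ^ n + 1, by rw [dyadicGrid_of_lt (Nat.lt_succ_self _)]; exact le_top⟩

noncomputable def dyadicIndex (n : ℕ) (x : ℝ≥0∞) : ℕ :=
  Nat.find (exists_le_dyadicGrid n x)

lemma dyadicIndex_le_iff {n k : ℕ} {x : ℝ≥0∞} : dyadicIndex n x ≤ k ↔ x ≤ dyadicGrid n k := by
  rw [dyadicIndex, Nat.find_le_iff]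
  exact ⟨fun ⟨j, hjk, hj⟩ => hj.trans (monotone_dyadicGrid n hjk), fun h => ⟨k, le_rfl, h⟩⟩

lemma dyadicIndex_le (n : ℕ) (x : ℝ≥0∞) : dyadicIndex n x ≤ n * 2 ^ n + 1 :=
  dyadicIndex_le_iff.2 (by rw [dyadicGrid_of_lt (Nat.lt_succ_self _)]; exact le_top)

lemma le_dyadicGrid_dyadicIndex (n : ℕ) (x : ℝ≥0∞) : x ≤ dyadicGrid n (dyadicIndex n x) :=
  dyadicIndex_le_iff.1 le_rfl

lemma dyadicGrid_dyadicIndex_le {n : ℕ} {x : ℝ≥0} (hx : x ≤ n) :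
    dyadicGrid n (dyadicIndex n x) ≤ ((x + (2 ^ n)⁻¹ : ℝ≥0) : ℝ≥0∞) := by
  set k := ⌈x * 2 ^ n⌉₊
  have h2 : (0 : ℝ≥0) < 2 ^ n := by positivity
  have hk : k ≤ n * 2 ^ n := Nat.ceil_le.2 (by push_cast; gcongr)
  have hgrid : dyadicGrid n k = ((k / 2 ^ n : ℝ≥0) : ℝ≥0∞) := if_pos hk
  calc dyadicGrid n (dyadicIndex n x) ≤ dyadicGrid n k := by
        refine monotone_dyadicGrid n (dyadicIndex_le_iff.2 ?_)
        rw [hgrid, ENNReal.coe_le_coe, le_div_iff₀ h2]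
        exact Nat.le_ceil _
    _ ≤ ((x + (2 ^ n)⁻¹ : ℝ≥0) : ℝ≥0∞) := by
        rw [hgrid, ENNReal.coe_le_coe, div_le_iff₀ h2, add_mul, inv_mul_cancel₀ h2.ne']
        exact (Nat.ceil_lt_add_one zero_le).le

lemma tendsto_dyadicGrid_dyadicIndex (x : ℝ≥0∞) :
    Tendsto (fun n => dyadicGrid n (dyadicIndex n x)) atTop (𝓝[≥] x) := by
  refine tendsto_nhdsWithin_iff.2 ⟨?_, Eventually.of_forall fun n => le_dyadicGrid_dyadicIndex n x⟩
  induction x with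
  | top => simp [top_le_iff.1 (le_dyadicGrid_dyadicIndex _ ⊤)]
  | coe x =>
    have hup : Tendsto (fun n : ℕ => ((x + (2 ^ n)⁻¹ : ℝ≥0) : ℝ≥0∞)) atTop (𝓝 x) := by
      refine ENNReal.tendsto_coe.2 ?_
      simpa using tendsto_const_nhds.add (NNReal.tendsto_pow_atTop_nhds_zero_of_lt_one
        (r := 2⁻¹) (by norm_num))
    refine tendsto_of_tendsto_of_tendsto_of_le_of_le' tendsto_const_nhds hup
      (Eventually.of_forall fun n => le_dyadicGrid_dyadicIndex n x) ?_
    filter_upwards [eventually_ge_atTop ⌈x⌉₊] with n hn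
    exact dyadicGrid_dyadicIndex_le ((Nat.le_ceil x).trans (by exact_mod_cast hn))

namespace MeasureTheory

variable {Ω ι κ : Type*} {m₀ : MeasurableSpace Ω} {μ : Measure Ω}

def Filtration.precomp [Preorder ι] [Preorder κ] (𝒻 : Filtration ι m₀) {t : κ → ι}
    (ht : Monotone t) : Filtration κ m₀ :=
  ⟨fun k => 𝒻 (t k), fun _ _ hkl => 𝒻.mono (ht hkl), fun k => 𝒻.le (t k)⟩

theorem Submartingale.precomp [Preorder ι] [Preorder κ] {𝒻 : Filtration ι m₀} {Y : ι → Ω → ℝ}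
    (hY : Submartingale Y 𝒻 μ) {t : κ → ι} (ht : Monotone t) :
    Submartingale (fun k => Y (t k)) (𝒻.precomp ht) μ :=
  ⟨fun k => hY.stronglyAdapted (t k), fun _ _ hkl => hY.ae_le_condExp (ht hkl),
    fun k => hY.integrable (t k)⟩

theorem Submartingale.stoppedValue_le_condExp [IsFiniteMeasure μ] {𝒢 : Filtration ℕ m₀}
    {f : ℕ → Ω → ℝ} (hf : Submartingale f 𝒢 μ) {ρ : Ω → WithTop ℕ} (hρ : IsStoppingTime 𝒢 ρ)
    {N : ℕ} (hbdd : ∀ ω, ρ ω ≤ N) :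
    stoppedValue f ρ ≤ᵐ[μ] μ[f N | hρ.measurableSpace] := by
  have hfM : ∀ᵐ ω ∂μ, ∀ i ≤ N, f i ω ≤ μ[f N | 𝒢 i] ω := by
    refine ae_all_iff.2 fun i => ?_
    by_cases hi : i ≤ N
    · filter_upwards [hf.ae_le_condExp hi] with ω hω using fun _ => hω
    · exact Eventually.of_forall fun ω h => absurd h hi
  have hstop : stoppedValue f ρ ≤ᵐ[μ] stoppedValue (fun i => μ[f N | 𝒢 i]) ρ := by
    filter_upwards [hfM] with ω hω
    obtain ⟨i, hi⟩ := WithTop.ne_top_iff_exists.1 (ne_top_of_le_ne_top WithTop.coe_ne_top (hbdd ω))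
    have hiN : i ≤ N := WithTop.coe_le_coe.1 (hi ▸ hbdd ω)
    simp only [stoppedValue, ← hi]
    exact hω i hiN
  refine hstop.trans_eq ?_
  exact ((martingale_condExp (f N) 𝒢 μ).stoppedValue_ae_eq_condExp_of_le_const hρ hbdd).trans
    (condExp_condExp_of_le (hρ.measurableSpace_le_of_le_const hbdd) (𝒢.le N))

theorem condExp_sub_const_le_condExp_max [IsFiniteMeasure μ] {m : MeasurableSpace Ω}
    (hm : m ≤ m₀) {g : Ω → ℝ} (hg : Integrable g μ) (c : ℝ) :
    (fun ω => μ[g | m] ω - c) ≤ᵐ[μ] μ[fun ω => max (g ω - c) 0 | m] := by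
  have hsub : μ[g - fun _ => c | m] =ᵐ[μ] fun ω => μ[g | m] ω - c := by
    filter_upwards [condExp_sub hg (integrable_const c) m] with ω hω
    simpa [condExp_const hm] using hω
  exact hsub.symm.trans_le (condExp_mono (hg.sub (integrable_const c))
    (hg.sub (integrable_const c)).pos_part (Eventually.of_forall fun ω => le_max_left _ _))

end MeasureTheory

section OptionalSampling

variable {Ω : Type*} {mΩ : MeasurableSpace Ω} {μ : Measure Ω} {𝒻 : Filtration ℝ≥0∞ mΩ}
  {τ : Ω → ℝ≥0∞}

theorem isStoppingTime_dyadicIndex (hτ : IsStoppingTime 𝒻 (fun ω => (τ ω : WithTop ℝ≥0∞)))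
    (n : ℕ) :
    IsStoppingTime (𝒻.precomp (monotone_dyadicGrid n))
      (fun ω => (dyadicIndex n (τ ω) : WithTop ℕ)) := by
  intro k
  show MeasurableSet[𝒻 (dyadicGrid n k)] _
  simpa only [ENat.some_eq_natCast, Nat.cast_le, WithTop.coe_le_coe, dyadicIndex_le_iff] using
    hτ (dyadicGrid n k)

theorem integrable_and_integral_sub_le_integral_stopped [IsFiniteMeasure μ]
    {Y : ℝ≥0∞ → Ω → ℝ}
    (hrc : ∀ ω, ∀ t : ℝ≥0∞, ContinuousWithinAt (fun s => Y s ω) (Set.Ici t) t)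
    (hsub : Submartingale Y 𝒻 μ) (hτ : IsStoppingTime 𝒻 (fun ω => (τ ω : WithTop ℝ≥0∞)))
    (c : ℝ) :
    Integrable (fun ω => Y (τ ω) ω) μ ∧
      ∫ ω, Y 0 ω ∂μ - ∫ ω, max (Y ⊤ ω - c) 0 ∂μ ≤ ∫ ω, Y (τ ω) ω ∂μ := by
  set ρ : ℕ → Ω → WithTop ℕ := fun n ω => dyadicIndex n (τ ω)
  have hρ : ∀ n, IsStoppingTime _ (ρ n) := isStoppingTime_dyadicIndex hτ
  have hρN : ∀ n ω, ρ n ω ≤ (n * 2 ^ n + 1 : ℕ) := fun n ω =>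
    WithTop.coe_le_coe.2 (dyadicIndex_le n (τ ω))
  have hY : ∀ n, Submartingale (fun k => Y (dyadicGrid n k)) _ μ := fun n =>
    hsub.precomp (monotone_dyadicGrid n)
  set Yρ : ℕ → Ω → ℝ := fun n => stoppedValue (fun k => Y (dyadicGrid n k)) (ρ n)
  set g : Ω → ℝ := fun ω => max (Y ⊤ ω - c) 0
  have hint : ∀ n, Integrable (Yρ n) μ := fun n =>
    (hY n).integrable_stoppedValue (hρ n) (hρN n)
  have hstart : ∀ n, ∫ ω, Y 0 ω ∂μ ≤ ∫ ω, Yρ n ω ∂μ := fun n => by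
    have hmono := (hY n).expected_stoppedValue_mono (isStoppingTime_const _ 0) (hρ n)
      (fun ω => bot_le) (hρN n)
    rwa [stoppedValue_const, dyadicGrid_zero] at hmono
  have hdom : ∀ n, (fun ω => Yρ n ω - c) ≤ᵐ[μ] μ[g | (hρ n).measurableSpace] := fun n => by
    have hclosed := (hY n).stoppedValue_le_condExp (hρ n) (hρN n)
    rw [dyadicGrid_of_lt (Nat.lt_succ_self _)] at hclosed
    filter_upwards [hclosed, condExp_sub_const_le_condExp_max (hρ n).measurableSpace_le
      (hsub.integrable ⊤) c] with ω h₁ h₂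
    exact (sub_le_sub_right h₁ c).trans h₂
  have hlim : ∀ ω, Tendsto (fun n => Yρ n ω) atTop (𝓝 (Y (τ ω) ω)) := fun ω =>
    (hrc ω (τ ω)).tendsto.comp (tendsto_dyadicGrid_dyadicIndex (τ ω))
  obtain ⟨hintτ, hle⟩ := integrable_and_sub_le_integral_of_tendsto
    (f := fun n ω => Yρ n ω - c) (F := fun ω => Y (τ ω) ω - c)
    (a := ∫ ω, Y 0 ω ∂μ - ∫ _, c ∂μ) (K := ∫ ω, g ω ∂μ)
    (fun n => (hint n).sub (integrable_const c)) (fun n => integrable_condExp)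
    (fun n => condExp_nonneg (Eventually.of_forall fun ω => le_max_right _ _)) hdom
    (fun n => (integral_condExp _).le)
    (fun n => by rw [integral_sub (hint n) (integrable_const c)]; linarith [hstart n])
    (Eventually.of_forall fun ω => (hlim ω).sub_const c)
  have hYτ : Integrable (fun ω => Y (τ ω) ω) μ :=
    (hintτ.add (integrable_const c)).congr (Eventually.of_forall fun ω => sub_add_cancel _ c)
  refine ⟨hYτ, ?_⟩
  rw [integral_sub hYτ (integrable_const c)] at hle
  linarith

end OptionalSampling

theorem stmt2_general {Ω : Type*} {mΩ : MeasurableSpace Ω} {μ : Measure Ω} [IsProbabilityMeasure μ]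
    (𝒻 : Filtration ℝ≥0∞ mΩ)
    (Y : ℝ≥0∞ → Ω → ℝ)
    (hrc : ∀ ω, ∀ t : ℝ≥0∞, ContinuousWithinAt (fun s => Y s ω) (Set.Ici t) t)
    (hsub : Submartingale Y 𝒻 μ)
    (τ : Ω → ℝ≥0∞) (hτ : IsStoppingTime 𝒻 (fun ω => (τ ω : WithTop ℝ≥0∞))) :
    Integrable (fun ω => Y (τ ω) ω) μ ∧ ∫ ω, Y 0 ω ∂μ ≤ ∫ ω, Y (τ ω) ω ∂μ := by
  have hc := fun c => integrable_and_integral_sub_le_integral_stopped hrc hsub hτ c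
  have hlim : Tendsto (fun c : ℝ => ∫ ω, Y 0 ω ∂μ - ∫ ω, max (Y ⊤ ω - c) 0 ∂μ) atTop
      (𝓝 (∫ ω, Y 0 ω ∂μ)) := by
    simpa using tendsto_const_nhds.sub (tendsto_integral_max_sub_const_atTop (hsub.integrable ⊤))
  exact ⟨(hc 0).1, le_of_tendsto' hlim fun c => (hc c).2⟩

/-- Optional sampling for a right-closed right-continuous submartingale
indexed by `[0,∞]`: for any stopping time `τ`, `Y_τ` is integrable and `Y_0 ≤ E[Y_τ]`.
(The index set `ℝ≥0∞` includes `∞`, so the submartingale property `Y_t ≤ E[Y_∞ | F_t]`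
is part of the submartingale hypothesis.) -/
theorem stmt2 {Ω : Type*} {mΩ : MeasurableSpace Ω} {μ : Measure Ω} [IsProbabilityMeasure μ]
    (𝒻 : Filtration ℝ≥0∞ mΩ)
    (husual : ∀ t : ℝ≥0∞, t < ⊤ → 𝒻 t = ⨅ s ∈ Set.Ioi t, 𝒻 s)  -- right-continuous filtration
    (Y : ℝ≥0∞ → Ω → ℝ)
    (hrc : ∀ ω, ∀ t : ℝ≥0∞, ContinuousWithinAt (fun s => Y s ω) (Set.Ici t) t)
    (hsub : Submartingale Y 𝒻 μ)
    (τ : Ω → ℝ≥0∞) (hτ : IsStoppingTime 𝒻 (fun ω => (τ ω : WithTop ℝ≥0∞))) :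
    Integrable (fun ω => Y (τ ω) ω) μ ∧ ∫ ω, Y 0 ω ∂μ ≤ ∫ ω, Y (τ ω) ω ∂μ :=
  stmt2_general 𝒻 Y hrc hsub τ hτ
end

section
/- Let H be a real Hilbert space and Q : H × H → ℝ a continuous symmetric positive semidefinite bilinear form. Suppose (u_n) is a sequence in H that is Q-bounded (sup_n Q(u_n,u_n) < ∞) and bounded in norm. Then there is a subsequence whose Cesàro means form a Q-Cauchy sequence, i.e., Q(σ_n - σ_m, σ_n - σ_m) → 0 where σ_n are the Cesàro means of the subsequence. -/
/-!
By Cauchy–Schwarz the Gram matrix `Q (u i) (u j)` is bounded. Compactness of a product of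
intervals gives a subsequence along which every row converges, Bolzano–Weierstrass makes the row
limits converge to some `c`, and a sparse refinement makes `Q (u (φ i)) (u (φ j))` lie within
`ε i → 0` of `c` whenever `i < j`. The double Cesàro mean of this Gram matrix then tends to `c`:
the diagonal contributes `O(1/m)` and the off-diagonal error is a Cesàro mean of `ε`. Expanding
`Q (σ n - σ m) (σ n - σ m)` into three such double means gives the limit `c - 2 c + c = 0`.
-/

open Filter Finset Topology

noncomputable def cesaroMean {M : Type*} [AddCommGroup M] [Module ℝ M] (v : ℕ → M) (n : ℕ) : M :=
  (n + 1 : ℝ)⁻¹ • ∑ i ∈ range (n + 1), v i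

noncomputable def doubleCesaroMean (A : ℕ → ℕ → ℝ) (n m : ℕ) : ℝ :=
  (n + 1 : ℝ)⁻¹ * (m + 1 : ℝ)⁻¹ * ∑ i ∈ range (n + 1), ∑ j ∈ range (m + 1), A i j

theorem Filter.Tendsto.cesaroMean {E : Type*} [NormedAddCommGroup E] [NormedSpace ℝ E]
    {v : ℕ → E} {l : E} (h : Tendsto v atTop (𝓝 l)) : Tendsto (cesaroMean v) atTop (𝓝 l) :=
  (h.cesaro_smul.comp (tendsto_add_atTop_nat 1)).congr fun n => by
    simp [_root_.cesaroMean]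

theorem Filter.extraction_forall_lt_of_eventually {P : ℕ → ℕ → Prop}
    (h : ∀ n, ∀ᶠ k in atTop, P n k) :
    ∃ φ : ℕ → ℕ, StrictMono φ ∧ ∀ i j, i < j → P (φ i) (φ j) := by
  -- Since `φ` is increasing, `P m (φ (k + 1))` for all `m ≤ φ k` covers every earlier `φ i`.
  have hnext : ∀ a, ∃ b, a < b ∧ ∀ m ≤ a, P m b := fun a =>
    ((eventually_gt_atTop a).and ((Set.finite_le_nat a).eventually_all.2 fun m _ => h m)).exists
  choose next hlt hP using hnext
  set φ : ℕ → ℕ := fun n => next^[n] 0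
  have hsucc (n : ℕ) : φ (n + 1) = next (φ n) := Function.iterate_succ_apply' _ _ _
  have hφ : StrictMono φ := strictMono_nat_of_lt_succ fun n => hsucc n ▸ hlt _
  refine ⟨φ, hφ, fun i j hij => ?_⟩
  obtain ⟨k, rfl⟩ := Nat.exists_eq_add_of_lt hij
  rw [hsucc]
  exact hP _ _ (hφ.monotone (Nat.le_add_right i k))

theorem exists_strictMono_abs_sub_le_of_abs_le {A : ℕ → ℕ → ℝ} {C : ℝ}
    (hA : ∀ i j, |A i j| ≤ C) :
    ∃ φ : ℕ → ℕ, StrictMono φ ∧ ∃ c : ℝ, ∃ ε : ℕ → ℝ, Tendsto ε atTop (𝓝 0) ∧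
      ∀ i j, i < j → |A (φ i) (φ j) - c| ≤ ε i := by
  obtain ⟨f, hfC, φ, hφ, hlim⟩ := (isCompact_univ_pi fun _ : ℕ => isCompact_Icc).tendsto_subseq
    (x := fun j i => A i j) fun j i _ => abs_le.mp (hA i j)
  rw [tendsto_pi_nhds] at hlim
  obtain ⟨c, -, θ, hθ, hfc⟩ := isCompact_Icc.tendsto_subseq fun n => hfC (φ n) trivial
  set ψ := φ ∘ θ
  have hrow (m : ℕ) : ∀ᶠ k in atTop, |A (ψ m) (ψ k) - f (ψ m)| ≤ (m + 1 : ℝ)⁻¹ :=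
    ((hlim (ψ m)).comp hθ.tendsto_atTop).eventually
      (Metric.closedBall_mem_nhds _ (by positivity))
  obtain ⟨τ, hτ, hclose⟩ := extraction_forall_lt_of_eventually hrow
  refine ⟨ψ ∘ τ, (hφ.comp hθ).comp hτ, c, fun i => (τ i + 1 : ℝ)⁻¹ + |f (ψ (τ i)) - c|, ?_,
    fun i j hij => ?_⟩
  · have h₁ := (tendsto_one_div_add_atTop_nhds_zero_nat (𝕜 := ℝ)).comp hτ.tendsto_atTop
    have h₂ := ((hfc.comp hτ.tendsto_atTop).sub_const c).abs
    simpa [ψ] using h₁.add h₂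
  · calc |A (ψ (τ i)) (ψ (τ j)) - c|
        ≤ |A (ψ (τ i)) (ψ (τ j)) - f (ψ (τ i))| + |f (ψ (τ i)) - c| := abs_sub_le _ _ _
      _ ≤ (τ i + 1 : ℝ)⁻¹ + |f (ψ (τ i)) - c| := by gcongr; exact hclose i j hij

theorem abs_doubleCesaroMean_sub_le {A : ℕ → ℕ → ℝ} {c D : ℝ} {e : ℕ → ℝ} (hD : 0 ≤ D)
    (hA : ∀ i j, |A i j - c| ≤ (if i = j then D else 0) + e i + e j) (n m : ℕ) :
    |doubleCesaroMean A n m - c| ≤ D * (m + 1 : ℝ)⁻¹ + cesaroMean e n + cesaroMean e m := by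
  have hdiag : ∑ i ∈ range (n + 1), ∑ j ∈ range (m + 1), (if i = j then D else 0)
      ≤ (n + 1) * D :=
    calc _ ≤ ∑ i ∈ range (n + 1), D :=
          sum_le_sum fun i _ => by rw [sum_ite_eq]; split_ifs <;> simp [hD]
      _ = _ := by simp
  have hcenter : doubleCesaroMean A n m - c = (n + 1 : ℝ)⁻¹ * (m + 1 : ℝ)⁻¹ *
      ∑ i ∈ range (n + 1), ∑ j ∈ range (m + 1), (A i j - c) := by
    simp only [doubleCesaroMean, sum_sub_distrib, sum_const, card_range, nsmul_eq_mul]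
    field_simp
    push_cast
    ring
  rw [hcenter, abs_mul, abs_of_pos (by positivity)]
  calc _ ≤ (n + 1 : ℝ)⁻¹ * (m + 1 : ℝ)⁻¹ *
        ∑ i ∈ range (n + 1), ∑ j ∈ range (m + 1), ((if i = j then D else 0) + e i + e j) := by
        gcongr
        exact (abs_sum_le_sum_abs _ _).trans <| sum_le_sum fun i _ =>
          (abs_sum_le_sum_abs _ _).trans <| sum_le_sum fun j _ => hA i j
    _ = (n + 1 : ℝ)⁻¹ * (m + 1 : ℝ)⁻¹ *
          ∑ i ∈ range (n + 1), ∑ j ∈ range (m + 1), (if i = j then D else 0)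
        + cesaroMean e n + cesaroMean e m := by
        simp only [cesaroMean, sum_add_distrib, sum_const, card_range, nsmul_eq_mul,
          ← mul_sum, smul_eq_mul]
        field_simp
        push_cast
        ring
    _ ≤ _ := by
        gcongr ?_ + _ + _
        calc _ ≤ (n + 1 : ℝ)⁻¹ * (m + 1 : ℝ)⁻¹ * ((n + 1) * D) := by gcongr
          _ = _ := by field_simp

theorem tendsto_doubleCesaroMean {A : ℕ → ℕ → ℝ} {c D : ℝ} {ε : ℕ → ℝ}
    (hsymm : ∀ i j, A i j = A j i) (hdiag : ∀ i, |A i i - c| ≤ D)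
    (hupper : ∀ i j, i < j → |A i j - c| ≤ ε i) (hε : Tendsto ε atTop (𝓝 0)) :
    Tendsto (fun p : ℕ × ℕ => doubleCesaroMean A p.1 p.2) atTop (𝓝 c) := by
  have hD : 0 ≤ D := (abs_nonneg _).trans (hdiag 0)
  have hA (i j : ℕ) : |A i j - c| ≤ (if i = j then D else 0) + |ε i| + |ε j| := by
    rcases lt_trichotomy i j with h | rfl | h
    · rw [if_neg h.ne]
      linarith [hupper i j h, le_abs_self (ε i), abs_nonneg (ε j)]
    · rw [if_pos rfl]
      linarith [hdiag i, abs_nonneg (ε i)]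
    · rw [if_neg h.ne', hsymm]
      linarith [hupper j i h, le_abs_self (ε j), abs_nonneg (ε i)]
  have hmean : Tendsto (cesaroMean fun i => |ε i|) atTop (𝓝 0) := by
    simpa using hε.abs.cesaroMean
  have hinv := tendsto_one_div_add_atTop_nhds_zero_nat (𝕜 := ℝ)
  rw [← prod_atTop_atTop_eq, ← tendsto_sub_nhds_zero_iff]
  refine squeeze_zero_norm (fun p => abs_doubleCesaroMean_sub_le hD hA p.1 p.2) ?_
  simpa using (((hinv.comp tendsto_snd).const_mul D).add (hmean.comp tendsto_fst)).add
    (hmean.comp tendsto_snd)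

namespace LinearMap.BilinForm

variable {M : Type*} [AddCommGroup M] [Module ℝ M] (B : LinearMap.BilinForm ℝ M)

theorem abs_apply_le_of_apply_self_le (hs : ∀ x, 0 ≤ B x x) (hB : B.IsSymm) {x y : M}
    {C : ℝ} (hx : B x x ≤ C) (hy : B y y ≤ C) : |B x y| ≤ C := by
  have hC : 0 ≤ C := (hs x).trans hx
  refine abs_le_of_sq_le_sq ?_ hC
  calc B x y ^ 2 ≤ B x x * B y y := apply_sq_le_of_symm B hs (isSymm_iff.mp hB) x y
    _ ≤ C ^ 2 := by rw [sq]; exact mul_le_mul hx hy (hs y) hC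

theorem apply_cesaroMean_cesaroMean (v w : ℕ → M) (n m : ℕ) :
    B (cesaroMean v n) (cesaroMean w m) = doubleCesaroMean (fun i j => B (v i) (w j)) n m := by
  simp only [cesaroMean, doubleCesaroMean, map_smul, map_sum, smul_apply, LinearMap.sum_apply,
    smul_eq_mul, mul_sum]
  rw [sum_comm]
  ring_nf

theorem tendsto_apply_cesaroMean_sub (hB : B.IsSymm) (v : ℕ → M) {c : ℝ}
    (h : Tendsto (fun p : ℕ × ℕ => doubleCesaroMean (fun i j => B (v i) (v j)) p.1 p.2)
      atTop (𝓝 c)) :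
    Tendsto (fun p : ℕ × ℕ => B (cesaroMean v p.1 - cesaroMean v p.2)
      (cesaroMean v p.1 - cesaroMean v p.2)) atTop (𝓝 0) := by
  have hdiag₁ : Tendsto (fun p : ℕ × ℕ => (p.1, p.1)) atTop atTop := by
    rw [← prod_atTop_atTop_eq]
    exact tendsto_fst.prodMk tendsto_fst
  have hdiag₂ : Tendsto (fun p : ℕ × ℕ => (p.2, p.2)) atTop atTop := by
    rw [← prod_atTop_atTop_eq]
    exact tendsto_snd.prodMk tendsto_snd
  have := ((h.comp hdiag₁).sub (h.const_mul 2)).add (h.comp hdiag₂)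
  rw [show c - 2 * c + c = 0 by ring] at this
  refine this.congr fun p => ?_
  simp only [Function.comp_apply, ← apply_cesaroMean_cesaroMean, map_sub, LinearMap.sub_apply,
    hB.eq (cesaroMean v p.2) (cesaroMean v p.1)]
  ring

end LinearMap.BilinForm

theorem stmt8_general {H : Type*} [NormedAddCommGroup H] [InnerProductSpace ℝ H]
    (Q : H → H → ℝ)
    (hadd₁ : ∀ x y z : H, Q (x + y) z = Q x z + Q y z)
    (hsmul₁ : ∀ (c : ℝ) (x z : H), Q (c • x) z = c * Q x z)
    (hsym : ∀ x y : H, Q x y = Q y x)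
    (hpos : ∀ x : H, 0 ≤ Q x x)
    (u : ℕ → H) (CQ : ℝ)
    (hQbdd : ∀ n, Q (u n) (u n) ≤ CQ) :
    ∃ φ : ℕ → ℕ, StrictMono φ ∧
      Tendsto
        (fun p : ℕ × ℕ =>
          Q ((p.1 + 1 : ℝ)⁻¹ • ∑ i ∈ Finset.range (p.1 + 1), u (φ i) -
              (p.2 + 1 : ℝ)⁻¹ • ∑ i ∈ Finset.range (p.2 + 1), u (φ i))
            ((p.1 + 1 : ℝ)⁻¹ • ∑ i ∈ Finset.range (p.1 + 1), u (φ i) -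
              (p.2 + 1 : ℝ)⁻¹ • ∑ i ∈ Finset.range (p.2 + 1), u (φ i)))
        atTop (nhds 0) := by
  let B : LinearMap.BilinForm ℝ H := LinearMap.mk₂ ℝ Q hadd₁ hsmul₁
    (fun x y z => by rw [hsym, hadd₁, hsym y, hsym z])
    (fun c x z => by rw [hsym, hsmul₁, hsym, smul_eq_mul])
  have hB : B.IsSymm := ⟨hsym⟩
  have hbdd (i j : ℕ) : |B (u i) (u j)| ≤ CQ :=
    B.abs_apply_le_of_apply_self_le hpos hB (hQbdd i) (hQbdd j)
  obtain ⟨φ, hφ, c, ε, hε, hupper⟩ := exists_strictMono_abs_sub_le_of_abs_le hbdd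
  have hdiag (i : ℕ) : |B (u (φ i)) (u (φ i)) - c| ≤ CQ + |c| :=
    (abs_sub _ _).trans (by gcongr; exact hbdd _ _)
  exact ⟨φ, hφ, B.tendsto_apply_cesaroMean_sub hB (u ∘ φ)
    (tendsto_doubleCesaroMean (fun i j => hsym _ _) hdiag hupper hε)⟩

/-- Banach–Saks type theorem for energy forms: if `Q` is a continuous symmetric
positive semidefinite bilinear form on a real Hilbert space `H` and `(u_n)` is bounded in norm
and `Q`-bounded, then some subsequence has `Q`-Cauchy Cesàro means. -/
theorem stmt8 {H : Type*} [NormedAddCommGroup H] [InnerProductSpace ℝ H] [CompleteSpace H]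
    (Q : H → H → ℝ)
    (hcont : Continuous fun p : H × H => Q p.1 p.2)
    (hadd₁ : ∀ x y z : H, Q (x + y) z = Q x z + Q y z)
    (hsmul₁ : ∀ (c : ℝ) (x z : H), Q (c • x) z = c * Q x z)
    (hsym : ∀ x y : H, Q x y = Q y x)
    (hpos : ∀ x : H, 0 ≤ Q x x)
    (u : ℕ → H) (CQ Cn : ℝ)
    (hQbdd : ∀ n, Q (u n) (u n) ≤ CQ)
    (hnbdd : ∀ n, ‖u n‖ ≤ Cn) :
    ∃ φ : ℕ → ℕ, StrictMono φ ∧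
      Tendsto
        (fun p : ℕ × ℕ =>
          Q ((p.1 + 1 : ℝ)⁻¹ • ∑ i ∈ Finset.range (p.1 + 1), u (φ i) -
              (p.2 + 1 : ℝ)⁻¹ • ∑ i ∈ Finset.range (p.2 + 1), u (φ i))
            ((p.1 + 1 : ℝ)⁻¹ • ∑ i ∈ Finset.range (p.1 + 1), u (φ i) -
              (p.2 + 1 : ℝ)⁻¹ • ∑ i ∈ Finset.range (p.2 + 1), u (φ i)))
        atTop (nhds 0) :=
  stmt8_general Q hadd₁ hsmul₁ hsym hpos u CQ hQbdd
end
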